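/- arXiv:math/0411281 — 3 statements merged into one kernel-verified Lean document; each statement's English description precedes it below -/
import Mathlib

section
/- Let r ≥ 3 be an integer and let L = {0, 1/2, 1, ..., (r-2)/2} be the set of admissible spins (equivalently, indexed by integers a = 2j with 0 ≤ a ≤ r-2). Define the Fourier kernel H_{jk} = (-1)^{2j+2k} · sin(π(2j+1)(2k+1)/r) / sin(π/r), the quantum dimension dim_q j = H_{0j}, and N = Σ_{j∈L} (dim_q j)². Then for all j, l ∈ L one has the orthogonality relation Σ_{k∈L} H_{jk} · H_{kl} = N · δ_{jl}, where δ_{jl} is the Kronecker delta. -/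
/-!
By the product-to-sum formula, `H_{jk} H_{kl}` is `(-1)^(j+l) / (2 sin²(π/r))` times
`cos((k+1)·π(j-l)/r) - cos((k+1)·π(j+l+2)/r)`. Multiplying by `2 sin(x/2)` telescopes
`Σ_{k=1}^{r-1} cos(k x)`, so for `x = π t / r` with `2r ∤ t` the sum is `-(1 + cos(π t))/2`.
Off the diagonal `j - l` and `j + l + 2` have the same parity and the two sums cancel; on the
diagonal the first sum is `r - 1` and the second `-1`, giving `r / (2 sin²(π/r))`, which is
also `N`, the diagonal entry at `j = 0`.
-/

open Real Finset

/-- The Fourier kernel `H a b` for spins indexed by integers `a = 2j`, `b = 2k`: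
`H_{jk} = (-1)^{2j+2k} sin(π(2j+1)(2k+1)/r)/sin(π/r)`. -/
noncomputable def HopfH (r a b : ℕ) : ℝ :=
  (-1) ^ (a + b) * Real.sin (π * (a + 1) * (b + 1) / r) / Real.sin (π / r)

/-- The quantum dimension `dim_q j = H_{0j}`, indexed by `a = 2j`. -/
noncomputable def dimq (r a : ℕ) : ℝ := HopfH r 0 a

/-- The normalisation constant `N = Σ_{j∈L} (dim_q j)²`. -/
noncomputable def Nconst (r : ℕ) : ℝ := ∑ a ∈ Finset.range (r - 1), (dimq r a) ^ 2

theorem two_mul_sin_mul_sum_range_cos (n : ℕ) (x : ℝ) :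
    2 * sin (x / 2) * ∑ k ∈ range n, cos ((k + 1) * x) = sin ((n + 1 / 2) * x) - sin (x / 2) := by
  induction n with
  | zero => simp [div_eq_inv_mul]
  | succ n ih =>
    rw [sum_range_succ, mul_add, ih]
    have h₁ : (n + 1 / 2) * x = (n + 1) * x - x / 2 := by ring
    have h₂ : ((n + 1 : ℕ) + 1 / 2) * x = (n + 1) * x + x / 2 := by push_cast; ring
    rw [h₁, h₂, sin_sub, sin_add]
    ring

theorem sum_range_cos_mul_pi_div {r : ℕ} (hr : r ≠ 0) {t : ℤ} (ht : ¬ 2 * (r : ℤ) ∣ t) :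
    ∑ k ∈ range (r - 1), cos ((k + 1) * (π * t / r)) = -(1 + cos (π * t)) / 2 := by
  have hsin : sin (π * t / r / 2) ≠ 0 := by
    rw [Ne, sin_eq_zero_iff]
    rintro ⟨n, hn⟩
    refine ht ⟨n, ?_⟩
    have : (t : ℝ) = 2 * r * n := by
      field_simp at hn
      nlinarith [pi_pos]
    exact_mod_cast this
  have hangle : ((r - 1 : ℕ) + 1 / 2) * (π * t / r) = t * π - π * t / r / 2 := by
    rw [Nat.cast_pred (Nat.pos_of_ne_zero hr)]
    field_simp
    ring
  have htelescope := two_mul_sin_mul_sum_range_cos (r - 1) (π * t / r)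
  rw [hangle, sin_sub, sin_int_mul_pi, mul_comm (t : ℝ) π] at htelescope
  apply mul_left_cancel₀ (mul_ne_zero two_ne_zero hsin)
  rw [htelescope]
  ring

theorem HopfH_comm (r a b : ℕ) : HopfH r a b = HopfH r b a := by
  unfold HopfH
  ring_nf

theorem HopfH_mul_HopfH (r j k l : ℕ) :
    HopfH r j k * HopfH r k l =
      (-1) ^ (j + l) / (2 * sin (π / r) ^ 2) *
        (cos ((k + 1) * (π * ((j - l : ℤ) : ℝ) / r)) -
          cos ((k + 1) * (π * ((j + l + 2 : ℤ) : ℝ) / r))) := by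
  have hsign : (-1 : ℝ) ^ (j + k) * (-1) ^ (k + l) = (-1) ^ (j + l) := by
    rw [← pow_add, show j + k + (k + l) = j + l + 2 * k by ring, pow_add, pow_mul, neg_one_sq,
      one_pow, mul_one]
  have hprod : sin (π * (j + 1) * (k + 1) / r) * sin (π * (k + 1) * (l + 1) / r) =
      (cos ((k + 1) * (π * ((j - l : ℤ) : ℝ) / r)) -
        cos ((k + 1) * (π * ((j + l + 2 : ℤ) : ℝ) / r))) / 2 := by
    rw [eq_div_iff two_ne_zero, mul_comm _ (2 : ℝ), ← mul_assoc, two_mul_sin_mul_sin]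
    congr 2 <;> push_cast <;> ring
  unfold HopfH
  rw [div_mul_div_comm, mul_mul_mul_comm, hsign, hprod]
  ring

theorem not_two_mul_dvd_of_abs_lt {r : ℕ} {t : ℤ} (h₀ : t ≠ 0) (hlt : |t| < 2 * r) :
    ¬ 2 * (r : ℤ) ∣ t :=
  fun hdvd => h₀ (Int.eq_zero_of_abs_lt_dvd hdvd hlt)

theorem sum_HopfH_mul_HopfH_self {r j : ℕ} (hj : j + 1 < r) :
    ∑ k ∈ range (r - 1), HopfH r j k * HopfH r k j = r / (2 * sin (π / r) ^ 2) := by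
  have hdiag : ∑ k ∈ range (r - 1), cos ((k + 1) * (π * ((j - j : ℤ) : ℝ) / r)) = r - 1 := by
    simp [Nat.cast_pred (by omega : 0 < r)]
  have hsum := sum_range_cos_mul_pi_div (r := r) (by omega) (t := j + j + 2)
    (not_two_mul_dvd_of_abs_lt (by omega) (by rw [abs_of_nonneg (by omega)]; omega))
  have hcos : cos (π * ((j + j + 2 : ℤ) : ℝ)) = 1 := by
    rw [show π * ((j + j + 2 : ℤ) : ℝ) = ((j + 1 : ℕ) : ℝ) * (2 * π) by push_cast; ring]
    exact cos_nat_mul_two_pi _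
  simp_rw [HopfH_mul_HopfH, ← mul_sum, sum_sub_distrib, hdiag, hsum, hcos, ← two_mul,
    pow_mul, neg_one_sq, one_pow]
  ring

theorem sum_HopfH_mul_HopfH_of_ne {r j l : ℕ} (hj : j + 1 < r) (hl : l + 1 < r) (hjl : j ≠ l) :
    ∑ k ∈ range (r - 1), HopfH r j k * HopfH r k l = 0 := by
  have hsum₁ := sum_range_cos_mul_pi_div (r := r) (by omega) (t := j - l)
    (not_two_mul_dvd_of_abs_lt (by omega) (abs_lt.mpr ⟨by omega, by omega⟩))
  have hsum₂ := sum_range_cos_mul_pi_div (r := r) (by omega) (t := j + l + 2)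
    (not_two_mul_dvd_of_abs_lt (by omega) (by rw [abs_of_nonneg (by omega)]; omega))
  have hcos : cos (π * ((j + l + 2 : ℤ) : ℝ)) = cos (π * ((j - l : ℤ) : ℝ)) := by
    rw [show π * ((j + l + 2 : ℤ) : ℝ) = π * ((j - l : ℤ) : ℝ) + ((l + 1 : ℕ) : ℝ) * (2 * π) by
      push_cast; ring]
    exact cos_add_nat_mul_two_pi _ _
  rw [sum_congr rfl fun k _ => HopfH_mul_HopfH r j k l, ← mul_sum, sum_sub_distrib, hsum₁, hsum₂,
    hcos, sub_self, mul_zero]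

theorem Nconst_eq_div_sin_sq {r : ℕ} (hr : 1 < r) : Nconst r = r / (2 * sin (π / r) ^ 2) := by
  rw [← sum_HopfH_mul_HopfH_self (j := 0) hr, Nconst]
  exact sum_congr rfl fun a _ => by rw [dimq, sq, HopfH_comm r a 0]

/-- Orthogonality of the Hopf-link kernel:
`Σ_{k∈L} H_{jk} H_{kl} = N δ_{jl}`. -/
theorem hopf_kernel_orthogonality (r : ℕ) (hr : 3 ≤ r)
    (j l : ℕ) (hj : j ≤ r - 2) (hl : l ≤ r - 2) :
    ∑ k ∈ Finset.range (r - 1), HopfH r j k * HopfH r k l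
      = Nconst r * (if j = l then (1 : ℝ) else 0) := by
  by_cases hjl : j = l
  · subst hjl
    rw [if_pos rfl, mul_one, Nconst_eq_div_sin_sq (by omega), sum_HopfH_mul_HopfH_self (by omega)]
  · rw [if_neg hjl, mul_zero, sum_HopfH_mul_HopfH_of_ne (by omega) (by omega) hjl]
end

section
/- Let r ≥ 3 be an integer, L = {0, 1/2, 1, ..., (r-2)/2}, H_{jk} = (-1)^{2j+2k} sin(π(2j+1)(2k+1)/r)/sin(π/r), dim_q k = H_{0k}, and N = Σ_{k∈L} (dim_q k)². Then for every j ∈ L, Σ_{k∈L} (dim_q k) · H_{jk} = N · δ_{j0}; that is, summing the Hopf-link evaluation H_{jk} against the quantum dimensions annihilates every nonzero spin j and yields N when j = 0 (the 'killing' property of an encircling curve in the chain-mail calculus). -/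
open Real Finset

/-! With `s = sin (π / r)`, `dim_q k · H_{jk} = (-1)^j s⁻² sin (π (k+1) / r) sin (π (j+1)(k+1) / r)`,
so for `j ≠ 0` the claim is the discrete orthogonality of `n ↦ sin (π p n / r)` for `p = 1` and
`p = j + 1`. Product-to-sum turns this into the difference of two sums
`∑_{n<r} cos (π m n / r) = sin² (π m / 2)` at `m = j` and `m = j + 2`, which agree because the
two frequencies have the same parity. -/

lemma sum_range_cos_mul_pi_div_eq_sin_sq {r : ℕ} (hr : r ≠ 0) {m : ℤ} (hm : ¬(2 * r : ℤ) ∣ m) :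
    ∑ n ∈ range r, cos (π * m * n / r) = sin (π * m / 2) ^ 2 := by
  have hr' : (r : ℝ) ≠ 0 := Nat.cast_ne_zero.mpr hr
  set a := π * m / r
  have ha : sin (a / 2) ≠ 0 := by
    refine sin_ne_zero_iff.mpr fun k hk => hm ⟨k, ?_⟩
    have : (m : ℝ) = 2 * r * k := by
      simp only [a] at hk
      field_simp at hk
      linarith
    exact_mod_cast this
  have hra : (r : ℝ) * a = π * m := mul_div_cancel₀ _ hr'
  have hsc : sin (π * m / 2) * cos (π * m / 2) = 0 := by
    have h := sin_two_mul (π * m / 2)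
    rw [show 2 * (π * m / 2) = m * π by ring, sin_int_mul_pi] at h
    linarith
  apply mul_left_cancel₀ ha
  calc sin (a / 2) * ∑ n ∈ range r, cos (π * m * n / r)
      = sin (a / 2) * ∑ n ∈ range r, cos (a * n + 0) := by
        simp only [a, add_zero, mul_div_right_comm]
    _ = sin (π * m / 2) * cos (π * m / 2 - a / 2) := by
        rw [sin_mul_sum_cos, show (r : ℝ) * a / 2 = π * m / 2 by rw [hra],
          show ((r : ℝ) - 1) * a / 2 + 0 = π * m / 2 - a / 2 by linear_combination hra / 2]
    _ = sin (a / 2) * sin (π * m / 2) ^ 2 := by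
        rw [cos_sub]
        linear_combination cos (a / 2) * hsc

lemma sum_range_sin_mul_sin_eq_zero {r : ℕ} (hr : r ≠ 0) {p q : ℤ} (h₁ : ¬(2 * r : ℤ) ∣ q - p)
    (h₂ : ¬(2 * r : ℤ) ∣ q + p) :
    ∑ n ∈ range r, sin (π * p * n / r) * sin (π * q * n / r) = 0 := by
  have hterm : ∀ n : ℕ, sin (π * p * n / r) * sin (π * q * n / r)
      = (cos (π * ↑(q - p) * n / r) - cos (π * ↑(q + p) * n / r)) / 2 := by
    intro n
    push_cast
    rw [show π * (q - p) * n / r = π * q * n / r - π * p * n / r by ring,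
      show π * (q + p) * n / r = π * q * n / r + π * p * n / r by ring, cos_sub, cos_add]
    ring
  have hsq : sin (π * ↑(q + p) / 2) ^ 2 = sin (π * ↑(q - p) / 2) ^ 2 := by
    rw [show π * ↑(q + p) / 2 = π * ↑(q - p) / 2 + p * π by push_cast; ring,
      sin_add_int_mul_pi, mul_pow, sq ((-1 : ℝ) ^ p), ← mul_zpow]
    norm_num
  simp only [hterm, ← sum_div, sum_sub_distrib, sum_range_cos_mul_pi_div_eq_sin_sq hr h₁,
    sum_range_cos_mul_pi_div_eq_sin_sq hr h₂, hsq, sub_self, zero_div]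

lemma dimq_mul_hopfH (r j k : ℕ) :
    dimq r k * HopfH r j k = (-1) ^ j / sin (π / r) ^ 2 *
      (sin (π * (k + 1) / r) * sin (π * (j + 1) * (k + 1) / r)) := by
  have hsign : ((-1 : ℝ)) ^ k * (-1) ^ (j + k) = (-1) ^ j := by
    rw [← pow_add, show k + (j + k) = j + 2 * k by ring, pow_add, pow_mul, neg_one_sq,
      one_pow, mul_one]
  simp only [dimq, HopfH, CharP.cast_eq_zero, zero_add, mul_one]
  rw [← hsign]
  ring

theorem hopf_kernel_killing_general (r : ℕ) (j : ℕ) (hj : j ≤ r - 2) :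
    ∑ k ∈ Finset.range (r - 1), dimq r k * HopfH r j k
      = Nconst r * (if j = 0 then (1 : ℝ) else 0) := by
  rcases eq_or_ne j 0 with rfl | hj0
  · simp only [if_pos, mul_one, Nconst, sq, dimq]
  rw [if_neg hj0, mul_zero]
  have hr0 : r ≠ 0 := by omega
  have hj' : (0 : ℤ) < j := by exact_mod_cast Nat.pos_of_ne_zero hj0
  have hjr : (j : ℤ) + 2 ≤ r := by omega
  have horth := sum_range_sin_mul_sin_eq_zero hr0 (p := 1) (q := j + 1)
    (fun h => by have := Int.le_of_dvd (by omega) h; omega)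
    (fun h => by have := Int.le_of_dvd (by omega) h; omega)
  -- the `n = 0` term vanishes and `n = k + 1` for `k ∈ range (r - 1)` gives the rest
  rw [show range r = range (r - 1 + 1) by rw [Nat.sub_add_cancel (by omega)],
    sum_range_succ'] at horth
  simp only [dimq_mul_hopfH, ← mul_sum]
  apply mul_eq_zero_of_right
  simpa using horth

/-- The 'killing' property of an encircling curve:
`Σ_{k∈L} dim_q k · H_{jk} = N δ_{j0}`. -/
theorem hopf_kernel_killing (r : ℕ) (hr : 3 ≤ r) (j : ℕ) (hj : j ≤ r - 2) :
    ∑ k ∈ Finset.range (r - 1), dimq r k * HopfH r j k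
      = Nconst r * (if j = 0 then (1 : ℝ) else 0) :=
  hopf_kernel_killing_general r j hj
end

section
/- Let r ≥ 3 be an integer and L = {0, 1/2, 1, ..., (r-2)/2}, with H_{jk} = (-1)^{2j+2k} sin(π(2j+1)(2k+1)/r)/sin(π/r) and dim_q j = H_{0j}. Then the square matrix indexed by L with (j,k)-entry H_{jk}/dim_q j (the kernel of the Fourier transform relating the Turaev–Viro graph observable to the relativistic spin network invariant) is invertible. -/
open Real Finset

/-!
With `θ_a = π(a+1)/r ∈ (0, π)`, the identity `U_b(cos θ) sin θ = sin((b+1)θ)` turns the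
`(a, b)` entry `H_{ab}/dim_q a` into `(-1)^b U_b(cos θ_a)`. The kernel is therefore a matrix
of Chebyshev polynomials `U_0, …, U_{r-2}` evaluated at the distinct nodes `cos θ_a`, times a
diagonal sign matrix. Since `U_b` has degree `b`, the first factor is a Vandermonde matrix times
a unitriangular one up to the leading coefficients `2^b`, hence invertible.
-/

open Polynomial Polynomial.Chebyshev Matrix

namespace Matrix

variable {R : Type*} [CommRing R] {n : ℕ}

theorem det_eval_matrixOfPolynomials (v : Fin n → R) (p : Fin n → R[X])
    (h_deg : ∀ i, (p i).natDegree = i) :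
    (of fun i j => (p j).eval (v i)).det = (vandermonde v).det * ∏ i, (p i).leadingCoeff := by
  rw [eval_matrixOfPolynomials_eq_vandermonde_mul_matrixOfPolynomials v p fun i => (h_deg i).le,
    det_mul, det_of_isUpperTriangular (matrixOfPolynomials_blockTriangular p fun i => (h_deg i).le)]
  simp only [of_apply, leadingCoeff, h_deg]

theorem det_eval_matrixOfPolynomials_ne_zero [IsDomain R] {v : Fin n → R}
    (hv : Function.Injective v) {p : Fin n → R[X]} (h_deg : ∀ i, (p i).natDegree = i)
    (hp : ∀ i, p i ≠ 0) :
    (of fun i j => (p j).eval (v i)).det ≠ 0 := by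
  rw [det_eval_matrixOfPolynomials v p h_deg]
  exact mul_ne_zero (det_vandermonde_ne_zero_iff.mpr hv)
    (prod_ne_zero_iff.mpr fun i _ => leadingCoeff_ne_zero.mpr (hp i))

theorem det_eval_chebyshevU_ne_zero [IsDomain R] [NeZero (2 : R)] {v : Fin n → R}
    (hv : Function.Injective v) :
    (of fun i j : Fin n => (U R (j : ℕ)).eval (v i)).det ≠ 0 :=
  det_eval_matrixOfPolynomials_ne_zero hv (fun j => natDegree_U_natCast R j) fun j h =>
    pow_ne_zero (j : ℕ) (two_ne_zero (α := R))
      (by rw [← leadingCoeff_U_natCast, h, leadingCoeff_zero])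

end Matrix

theorem sin_pi_mul_div_pos {k r : ℕ} (hk0 : 0 < k) (hkr : k < r) : 0 < sin (π * k / r) := by
  have hr : (0 : ℝ) < r := by exact_mod_cast hk0.trans hkr
  refine sin_pos_of_pos_of_lt_pi (by positivity) ?_
  rw [div_lt_iff₀ hr, mul_lt_mul_iff_right₀ pi_pos]
  exact_mod_cast hkr

theorem HopfH_div_dimq {r a : ℕ} (b : ℕ) (ha : a + 1 < r) :
    HopfH r a b / dimq r a = (-1) ^ b * (U ℝ b).eval (cos (π * (a + 1) / r)) := by
  set θ := π * (a + 1) / r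
  have hθ : sin θ ≠ 0 := by
    have := sin_pi_mul_div_pos a.succ_pos ha
    push_cast at this
    exact this.ne'
  have hπr : sin (π / r) ≠ 0 := by
    simpa using (sin_pi_mul_div_pos one_pos (by omega : 1 < r)).ne'
  have hH : HopfH r a b = (-1) ^ (a + b) * ((U ℝ b).eval (cos θ) * sin θ) / sin (π / r) := by
    rw [U_real_cos, HopfH]
    congr 3
    push_cast
    ring
  have hdim : dimq r a = (-1) ^ a * sin θ / sin (π / r) := by
    rw [dimq, HopfH]
    congr 3 <;> push_cast <;> ring
  rw [hH, hdim]
  field_simp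
  ring

theorem injective_cos_pi_mul_succ_div (r : ℕ) :
    Function.Injective fun a : Fin (r - 1) => cos (π * ((a : ℕ) + 1) / r) := by
  intro a c hac
  have hr : (r : ℝ) ≠ 0 := by
    have := a.pos
    exact_mod_cast (by omega : r ≠ 0)
  have hmem (a : Fin (r - 1)) : π * ((a : ℕ) + 1) / r ∈ Set.Icc 0 π := by
    refine ⟨by positivity, ?_⟩
    rw [div_le_iff₀ (by positivity), mul_le_mul_iff_right₀ pi_pos]
    exact_mod_cast (by omega : (a : ℕ) + 1 ≤ r)
  have := injOn_cos (hmem a) (hmem c) hac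
  rw [div_left_inj' hr, mul_right_inj' pi_ne_zero, add_left_inj] at this
  exact Fin.ext (by exact_mod_cast this)

theorem fourier_kernel_invertible_general (r : ℕ) :
    IsUnit (Matrix.of fun a b : Fin (r - 1) =>
      HopfH r (a : ℕ) (b : ℕ) / dimq r (a : ℕ)) := by
  have hfactor : (of fun a b : Fin (r - 1) => HopfH r a b / dimq r a) =
      (of fun a b : Fin (r - 1) => (U ℝ (b : ℕ)).eval (cos (π * ((a : ℕ) + 1) / r))) *
        diagonal fun b : Fin (r - 1) => (-1 : ℝ) ^ (b : ℕ) := by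
    ext a b
    rw [mul_diagonal, of_apply, of_apply, HopfH_div_dimq _ (by omega), mul_comm]
  rw [hfactor]
  exact ((isUnit_iff_isUnit_det _).mpr
    (det_eval_chebyshevU_ne_zero (injective_cos_pi_mul_succ_div r)).isUnit).mul
    (isUnit_diagonal.mpr (Pi.isUnit_iff.mpr fun b => isUnit_neg_one.pow _))

/-- The kernel of the Fourier transform, the matrix with `(j,k)` entry
`H_{jk}/dim_q j`, is invertible. -/
theorem fourier_kernel_invertible (r : ℕ) (hr : 3 ≤ r) :
    IsUnit (Matrix.of fun a b : Fin (r - 1) =>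
      HopfH r (a : ℕ) (b : ℕ) / dimq r (a : ℕ)) :=
  fourier_kernel_invertible_general r
end
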